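/- Let L be a self-adjoint operator on a Hilbert space H with L + M₀ ≥ 0 for some M₀ ≥ 0, and suppose that for a family of bounded operators w_z (z ranging in some index set) and each 0 ≤ k ≤ N one has ‖Ad_z^k(e^{−tL})‖ ≤ C e^{M₀ t} t^{k/m} for t ∈ (0,1] and ‖Ad_z^k(e^{−tL})‖ ≤ C e^{M₀ t} t^{k/m'} for t ≥ 1 (with m, m' > 0). Then for every M > M₀, the resolvent R = (L+M)⁻¹ satisfies ‖Ad_z^k(R)‖ ≤ C' ((M−M₀)^{−1−k/m} + (M−M₀)^{−1−k/m'}) for 0 ≤ k ≤ N, with C' independent of z and M. -/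

import Mathlib

/-!
Writing the resolvent as the Laplace transform `∫₀^∞ e^{-Mt} e^{-tL} dt` and commuting `Ad_z^k`
(a bounded linear map) with the Bochner integral, the hypotheses give the pointwise bound
`‖e^{-Mt} Ad_z^k(e^{-tL})‖ ≤ C (t^{k/m} + t^{k/m'}) e^{-(M-M₀)t}` for all `t > 0`. Integrating,
`∫₀^∞ t^a e^{-rt} dt = Γ(a+1) r^{-1-a}`, and the finitely many Gamma values for `k ≤ N` are
absorbed into the constant.
-/

open MeasureTheory

/-- Iterated commutator of `T` with `w`. -/
def adPow {A : Type*} [Ring A] (w T : A) : ℕ → A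
  | 0 => T
  | k + 1 => w * adPow w T k - adPow w T k * w

open Set Real

section Commutator

variable {𝕜 A : Type*} [NontriviallyNormedField 𝕜] [NormedRing A] [NormedAlgebra 𝕜 A]

variable (𝕜) in
noncomputable def adCLM (w : A) : A →L[𝕜] A :=
  ContinuousLinearMap.mul 𝕜 A w - (ContinuousLinearMap.mul 𝕜 A).flip w

@[simp]
lemma adCLM_apply (w T : A) : adCLM 𝕜 w T = w * T - T * w := rfl

lemma adPow_eq_adCLM_pow (w T : A) (k : ℕ) : adPow w T k = (adCLM 𝕜 w ^ k) T := by
  induction k with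
  | zero => rfl
  | succ k ih => rw [adPow, ih, pow_succ', mul_apply_eq_comp, adCLM_apply]

end Commutator

lemma adPow_smul {R A : Type*} [Ring A] [DistribSMul R A] [IsScalarTower R A A]
    [SMulCommClass R A A] (w T : A) (c : R) (k : ℕ) : adPow w (c • T) k = c • adPow w T k := by
  induction k with
  | zero => rfl
  | succ k ih => rw [adPow, adPow, ih, mul_smul_comm, smul_mul_assoc, smul_sub]

section Integral

variable {A X : Type*} [NormedRing A] [NormedAlgebra ℝ A] [MeasurableSpace X] {μ : Measure X}
  {f : X → A}

lemma adPow_integral [CompleteSpace A] (hf : Integrable f μ) (w : A) (k : ℕ) :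
    adPow w (∫ x, f x ∂μ) k = ∫ x, adPow w (f x) k ∂μ := by
  simp only [adPow_eq_adCLM_pow (𝕜 := ℝ)]
  exact ((adCLM ℝ w ^ k).integral_comp_comm hf).symm

end Integral

section LaplaceTransform

lemma integrableOn_rpow_mul_exp_neg_mul {a r : ℝ} (ha : -1 < a) (hr : 0 < r) :
    IntegrableOn (fun t : ℝ => t ^ a * exp (-r * t)) (Ioi 0) := by
  simpa only [rpow_one] using integrableOn_rpow_mul_exp_neg_mul_rpow ha one_pos hr

lemma integral_rpow_mul_exp_neg_mul {a r : ℝ} (ha : -1 < a) (hr : 0 < r) :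
    ∫ t in Ioi 0, t ^ a * exp (-r * t) = Gamma (a + 1) * r ^ (-1 - a) := by
  have h := integral_rpow_mul_exp_neg_mul_rpow one_pos ha hr
  simp only [rpow_one, div_one, mul_one] at h
  rw [h, mul_comm]
  congr 2
  ring

variable {E : Type*} [NormedAddCommGroup E] {F : ℝ → E} {M₀ M C a b : ℝ}

lemma norm_le_mul_add_of_le_of_le (hC : 0 ≤ C)
    (hsmall : ∀ t : ℝ, 0 < t → t ≤ 1 → ‖F t‖ ≤ C * exp (M₀ * t) * t ^ a)
    (hlarge : ∀ t : ℝ, 1 ≤ t → ‖F t‖ ≤ C * exp (M₀ * t) * t ^ b) {t : ℝ} (ht : 0 < t) :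
    ‖F t‖ ≤ C * exp (M₀ * t) * (t ^ a + t ^ b) := by
  rw [mul_add]
  rcases le_total t 1 with h | h
  · have : 0 ≤ C * exp (M₀ * t) * t ^ b := by positivity
    linarith [hsmall t ht h]
  · have : 0 ≤ C * exp (M₀ * t) * t ^ a := by positivity
    linarith [hlarge t h]

variable [NormedSpace ℝ E]

lemma norm_exp_neg_mul_smul_le (hF : ∀ t : ℝ, 0 < t → ‖F t‖ ≤ C * exp (M₀ * t) * (t ^ a + t ^ b))
    {t : ℝ} (ht : 0 < t) :
    ‖exp (-M * t) • F t‖ ≤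
      C * (t ^ a * exp (-(M - M₀) * t) + t ^ b * exp (-(M - M₀) * t)) := by
  have hexp : exp (-M * t) * exp (M₀ * t) = exp (-(M - M₀) * t) := by
    rw [← exp_add]; congr 1; ring
  calc ‖exp (-M * t) • F t‖ = exp (-M * t) * ‖F t‖ := by
        rw [norm_smul, norm_of_nonneg (exp_pos _).le]
    _ ≤ exp (-M * t) * (C * exp (M₀ * t) * (t ^ a + t ^ b)) := by gcongr; exact hF t ht
    _ = _ := by rw [← hexp]; ring

lemma integrableOn_exp_neg_mul_smul (hFm : AEStronglyMeasurable F (volume.restrict (Ioi 0)))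
    (ha : -1 < a) (hb : -1 < b) (hM : M₀ < M)
    (hF : ∀ t : ℝ, 0 < t → ‖F t‖ ≤ C * exp (M₀ * t) * (t ^ a + t ^ b)) :
    IntegrableOn (fun t => exp (-M * t) • F t) (Ioi 0) := by
  have hr : 0 < M - M₀ := sub_pos.mpr hM
  refine Integrable.mono' (((integrableOn_rpow_mul_exp_neg_mul ha hr).add
    (integrableOn_rpow_mul_exp_neg_mul hb hr)).const_mul C) ?_ ?_
  · exact ((continuous_exp.comp (continuous_const.mul continuous_id)).aestronglyMeasurable).smul hFm
  · exact (ae_restrict_mem measurableSet_Ioi).mono fun t ht => norm_exp_neg_mul_smul_le hF ht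

lemma norm_integral_exp_neg_mul_smul_le (ha : -1 < a) (hb : -1 < b) (hM : M₀ < M)
    (hF : ∀ t : ℝ, 0 < t → ‖F t‖ ≤ C * exp (M₀ * t) * (t ^ a + t ^ b)) :
    ‖∫ t in Ioi 0, exp (-M * t) • F t‖ ≤
      C * (Gamma (a + 1) * (M - M₀) ^ (-1 - a) + Gamma (b + 1) * (M - M₀) ^ (-1 - b)) := by
  have hr : 0 < M - M₀ := sub_pos.mpr hM
  have hia := integrableOn_rpow_mul_exp_neg_mul ha hr
  have hib := integrableOn_rpow_mul_exp_neg_mul hb hr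
  calc ‖∫ t in Ioi 0, exp (-M * t) • F t‖
      ≤ ∫ t in Ioi 0, C * (t ^ a * exp (-(M - M₀) * t) + t ^ b * exp (-(M - M₀) * t)) :=
        norm_integral_le_of_norm_le ((hia.add hib).const_mul C)
          ((ae_restrict_mem measurableSet_Ioi).mono fun t ht => norm_exp_neg_mul_smul_le hF ht)
    _ = _ := by
        rw [integral_const_mul, integral_add hia hib, integral_rpow_mul_exp_neg_mul ha hr,
          integral_rpow_mul_exp_neg_mul hb hr]

end LaplaceTransform

lemma exists_pos_forall_le (f : ℕ → ℝ) (N : ℕ) : ∃ G : ℝ, 0 < G ∧ ∀ k ≤ N, f k ≤ G := by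
  obtain ⟨G, hG⟩ := ((finite_Iic N).image f).bddAbove
  exact ⟨max G 1, by positivity, fun k hk => (hG ⟨k, hk, rfl⟩).trans (le_max_left G 1)⟩

theorem adPow_resolvent_bound_general
    {H : Type*} [NormedAddCommGroup H] [InnerProductSpace ℂ H] [CompleteSpace H]
    {ι : Type*} (S : ℝ → H →L[ℂ] H) (w : ι → H →L[ℂ] H)
    (M₀ m m' C : ℝ) (N : ℕ)
    (hm : 0 < m) (hm' : 0 < m') (hC : 0 < C)
    (hmeas : StronglyMeasurable S)
    (hsmall : ∀ z : ι, ∀ k ≤ N, ∀ t : ℝ, 0 < t → t ≤ 1 →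
      ‖adPow (w z) (S t) k‖ ≤ C * Real.exp (M₀ * t) * t ^ ((k : ℝ) / m))
    (hlarge : ∀ z : ι, ∀ k ≤ N, ∀ t : ℝ, 1 ≤ t →
      ‖adPow (w z) (S t) k‖ ≤ C * Real.exp (M₀ * t) * t ^ ((k : ℝ) / m')) :
    ∃ C' : ℝ, 0 < C' ∧ ∀ M : ℝ, M₀ < M → ∀ z : ι, ∀ k ≤ N,
      ‖adPow (w z) (∫ t in Set.Ioi (0 : ℝ), Real.exp (-M * t) • S t) k‖ ≤
        C' * ((M - M₀) ^ (-1 - (k : ℝ) / m) + (M - M₀) ^ (-1 - (k : ℝ) / m')) := by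
  obtain ⟨G, hG, hΓ⟩ :=
    exists_pos_forall_le (fun k => max (Gamma ((k : ℝ) / m + 1)) (Gamma ((k : ℝ) / m' + 1))) N
  refine ⟨C * G, by positivity, fun M hM z k hk => ?_⟩
  have hexponent : ∀ (j : ℕ) {p : ℝ}, 0 < p → -1 < (j : ℝ) / p := fun j p hp =>
    neg_one_lt_zero.trans_le (by positivity)
  have hbound : ∀ j ≤ N, ∀ t : ℝ, 0 < t →
      ‖adPow (w z) (S t) j‖ ≤ C * exp (M₀ * t) * (t ^ ((j : ℝ) / m) + t ^ ((j : ℝ) / m')) :=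
    fun j hj t => norm_le_mul_add_of_le_of_le hC.le (hsmall z j hj) (hlarge z j hj)
  have hint : IntegrableOn (fun t => exp (-M * t) • S t) (Ioi 0) :=
    integrableOn_exp_neg_mul_smul hmeas.aestronglyMeasurable (hexponent 0 hm) (hexponent 0 hm') hM
      (hbound 0 N.zero_le)
  rw [adPow_integral hint]
  simp only [adPow_smul]
  calc _ ≤ C * (Gamma ((k : ℝ) / m + 1) * (M - M₀) ^ (-1 - (k : ℝ) / m)
          + Gamma ((k : ℝ) / m' + 1) * (M - M₀) ^ (-1 - (k : ℝ) / m')) :=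
        norm_integral_exp_neg_mul_smul_le (hexponent k hm) (hexponent k hm') hM (hbound k hk)
    _ ≤ C * (G * (M - M₀) ^ (-1 - (k : ℝ) / m) + G * (M - M₀) ^ (-1 - (k : ℝ) / m')) := by
        gcongr
        exacts [(le_max_left _ _).trans (hΓ k hk), (le_max_right _ _).trans (hΓ k hk)]
    _ = C * G * ((M - M₀) ^ (-1 - (k : ℝ) / m) + (M - M₀) ^ (-1 - (k : ℝ) / m')) := by ring

/-- if the iterated commutators of the heat semigroup `S t = e^{−tL}`
with a family of bounded operators `w z` satisfy
`‖Ad_z^k(e^{−tL})‖ ≤ C e^{M₀t} t^{k/m}` for `0 < t ≤ 1` and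
`‖Ad_z^k(e^{−tL})‖ ≤ C e^{M₀t} t^{k/m'}` for `t ≥ 1`, then for `M > M₀` the resolvent
`R = (L+M)⁻¹ = ∫₀^∞ e^{−Mt} e^{−tL} dt` satisfies
`‖Ad_z^k(R)‖ ≤ C' ((M−M₀)^{−1−k/m} + (M−M₀)^{−1−k/m'})` uniformly in `z` and `M`. -/
theorem adPow_resolvent_bound
    {H : Type*} [NormedAddCommGroup H] [InnerProductSpace ℂ H] [CompleteSpace H]
    {ι : Type*} (S : ℝ → H →L[ℂ] H) (w : ι → H →L[ℂ] H)
    (M₀ m m' C : ℝ) (N : ℕ)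
    (hM₀ : 0 ≤ M₀) (hm : 0 < m) (hm' : 0 < m') (hC : 0 < C)
    (hmeas : StronglyMeasurable S)
    (hsmall : ∀ z : ι, ∀ k ≤ N, ∀ t : ℝ, 0 < t → t ≤ 1 →
      ‖adPow (w z) (S t) k‖ ≤ C * Real.exp (M₀ * t) * t ^ ((k : ℝ) / m))
    (hlarge : ∀ z : ι, ∀ k ≤ N, ∀ t : ℝ, 1 ≤ t →
      ‖adPow (w z) (S t) k‖ ≤ C * Real.exp (M₀ * t) * t ^ ((k : ℝ) / m')) :
    ∃ C' : ℝ, 0 < C' ∧ ∀ M : ℝ, M₀ < M → ∀ z : ι, ∀ k ≤ N,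
      ‖adPow (w z) (∫ t in Set.Ioi (0 : ℝ), Real.exp (-M * t) • S t) k‖ ≤
        C' * ((M - M₀) ^ (-1 - (k : ℝ) / m) + (M - M₀) ^ (-1 - (k : ℝ) / m')) :=
  adPow_resolvent_bound_general S w M₀ m m' C N hm hm' hC hmeas hsmall hlarge
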